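/- The past mask P_{[a,b]} m is sufficient for the eventually context: for any three-valued signal s and any time t ≥ 0 with m(t) = true, F_{[a,b]}(s|_{P_{[a,b]}m})(t) = F_{[a,b]}(s)(t). -/

import Mathlib

inductive TV : Type | T | F | U
deriving DecidableEq

open TV Set Pointwise

def maskApply (s : ℝ → TV) (m : ℝ → Bool) : ℝ → TV :=
  fun t => if m t then s t else TV.U

def tvNot : TV → TV
  | TV.T => TV.F | TV.F => TV.T | TV.U => TV.U

def tvOr : TV → TV → TV
  | TV.T, _ => TV.T
  | _, TV.T => TV.T
  | TV.F, TV.F => TV.F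
  | _, _ => TV.U

def tvAnd : TV → TV → TV
  | TV.F, _ => TV.F
  | _, TV.F => TV.F
  | TV.T, TV.T => TV.T
  | _, _ => TV.U

open Classical in
noncomputable def evOp (a b : ℝ) (s : ℝ → TV) : ℝ → TV :=
  fun t =>
    if ∃ t' ∈ Set.Icc (t + a) (t + b), s t' = TV.T then TV.T
    else if ∀ t' ∈ Set.Icc (t + a) (t + b), s t' = TV.F then TV.F
    else TV.U

open Classical in
noncomputable def glOp (a b : ℝ) (s : ℝ → TV) : ℝ → TV :=
  fun t =>
    if ∃ t' ∈ Set.Icc (t + a) (t + b), s t' = TV.F then TV.F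
    else if ∀ t' ∈ Set.Icc (t + a) (t + b), s t' = TV.T then TV.T
    else TV.U

open Classical in
noncomputable def pastMask (a b : ℝ) (m : ℝ → Bool) : ℝ → Bool :=
  fun t => decide (∃ t'' ∈ Set.Icc (t - b) (t - a) ∩ Set.Ici (0:ℝ), m t'' = true)

def orMask (s : ℝ → TV) : ℝ → Bool := fun t => !(s t == TV.T)

def andMask (s : ℝ → TV) : ℝ → Bool := fun t => !(s t == TV.F)

def Hset (a b : ℝ) (S : Set ℝ) : Set ℝ := {t | Set.Icc (t - b) (t - a) ⊆ S}

def Pset (a b : ℝ) (S : Set ℝ) : Set ℝ := {t | ∃ t' ∈ Set.Icc (t - b) (t - a), t' ∈ S}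

theorem evOp_congr_of_eqOn (a b : ℝ) {s₁ s₂ : ℝ → TV} {t : ℝ}
    (h : EqOn s₁ s₂ (Icc (t + a) (t + b))) : evOp a b s₁ t = evOp a b s₂ t := by
  have hT : (∃ t' ∈ Icc (t + a) (t + b), s₁ t' = T) ↔ ∃ t' ∈ Icc (t + a) (t + b), s₂ t' = T :=
    exists_congr fun _ => and_congr_right fun ht' => by rw [h ht']
  have hF : (∀ t' ∈ Icc (t + a) (t + b), s₁ t' = F) ↔ ∀ t' ∈ Icc (t + a) (t + b), s₂ t' = F :=
    forall₂_congr fun _ ht' => by rw [h ht']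
  classical
  exact if_congr hT rfl (if_congr hF rfl rfl)

theorem pastMask_eq_true_of_mem_Icc {a b : ℝ} {m : ℝ → Bool} {t t' : ℝ} (ht : 0 ≤ t)
    (hm : m t = true) (ht' : t' ∈ Icc (t + a) (t + b)) : pastMask a b m t' = true := by
  simp only [pastMask, decide_eq_true_eq]
  exact ⟨t, ⟨⟨by linarith [ht'.2], by linarith [ht'.1]⟩, ht⟩, hm⟩

theorem maskApply_eqOn {s : ℝ → TV} {m : ℝ → Bool} {S : Set ℝ} (hS : ∀ t ∈ S, m t = true) :
    EqOn (maskApply s m) s S := fun t ht => by simp [maskApply, hS t ht]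

theorem pastMask_sufficient_eventually_general (a b : ℝ)
    (m : ℝ → Bool) (s : ℝ → TV) (t : ℝ) (ht : 0 ≤ t) (hm : m t = true) :
    evOp a b (maskApply s (pastMask a b m)) t = evOp a b s t :=
  evOp_congr_of_eqOn a b <| maskApply_eqOn fun _ ht' => pastMask_eq_true_of_mem_Icc ht hm ht'

theorem pastMask_sufficient_eventually (a b : ℝ) (ha : 0 ≤ a) (hab : a ≤ b)
    (m : ℝ → Bool) (s : ℝ → TV) (t : ℝ) (ht : 0 ≤ t) (hm : m t = true) :
    evOp a b (maskApply s (pastMask a b m)) t = evOp a b s t :=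
  pastMask_sufficient_eventually_general a b m s t ht hm
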